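/- arXiv:math/0506175 — 3 statements merged into one kernel-verified Lean document; each statement's English description precedes it below -/
import Mathlib

section
/- Let V be a finite-dimensional real vector space and let ω_I, ω_J, ω_K be nondegenerate skew-symmetric bilinear forms on V, regarded as linear isomorphisms ω̂_I, ω̂_J, ω̂_K : V → V* via v ↦ ω(v,·). If ω̂_I⁻¹∘ω̂_J = −ω̂_J⁻¹∘ω̂_I, ω̂_J⁻¹∘ω̂_K = −ω̂_K⁻¹∘ω̂_J, and ω̂_K⁻¹∘ω̂_I = −ω̂_I⁻¹∘ω̂_K, then the bilinear form g on V defined by g(v,w) = ((ω̂_I∘ω̂_J⁻¹∘ω̂_K)(v))(w) is symmetric and nondegenerate. -/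
/-- Let `V` be a finite-dimensional real vector space and `ωI, ωJ, ωK` nondegenerate
skew-symmetric bilinear forms on `V`, regarded as bijective linear maps `V → V*`,
`v ↦ ω v = ω (v, ·)`.  If `ωI⁻¹ ∘ ωJ = -ωJ⁻¹ ∘ ωI`, `ωJ⁻¹ ∘ ωK = -ωK⁻¹ ∘ ωJ` and
`ωK⁻¹ ∘ ωI = -ωI⁻¹ ∘ ωK`, then the bilinear form `g (v, w) = ((ωI ∘ ωJ⁻¹ ∘ ωK) v) w`
is symmetric and nondegenerate (i.e. the associated map `V → V*` is bijective). -/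
theorem stmt_0 {V : Type} [AddCommGroup V] [Module ℝ V] [FiniteDimensional ℝ V]
    (ωI ωJ ωK : V →ₗ[ℝ] Module.Dual ℝ V)
    (hskewI : ∀ v w : V, ωI v w = -(ωI w v))
    (hskewJ : ∀ v w : V, ωJ v w = -(ωJ w v))
    (hskewK : ∀ v w : V, ωK v w = -(ωK w v))
    (hbI : Function.Bijective ωI) (hbJ : Function.Bijective ωJ)
    (hbK : Function.Bijective ωK)
    (hIJ : (LinearEquiv.ofBijective ωI hbI).symm.toLinearMap ∘ₗ ωJ
        = -((LinearEquiv.ofBijective ωJ hbJ).symm.toLinearMap ∘ₗ ωI))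
    (hJK : (LinearEquiv.ofBijective ωJ hbJ).symm.toLinearMap ∘ₗ ωK
        = -((LinearEquiv.ofBijective ωK hbK).symm.toLinearMap ∘ₗ ωJ))
    (hKI : (LinearEquiv.ofBijective ωK hbK).symm.toLinearMap ∘ₗ ωI
        = -((LinearEquiv.ofBijective ωI hbI).symm.toLinearMap ∘ₗ ωK)) :
    (∀ v w : V, (ωI ((LinearEquiv.ofBijective ωJ hbJ).symm (ωK v))) w
        = (ωI ((LinearEquiv.ofBijective ωJ hbJ).symm (ωK w))) v)
    ∧ Function.Bijective
        (ωI ∘ₗ (LinearEquiv.ofBijective ωJ hbJ).symm.toLinearMap ∘ₗ ωK) := by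
  set eI := LinearEquiv.ofBijective ωI hbI with heI
  set eJ := LinearEquiv.ofBijective ωJ hbJ with heJ
  set eK := LinearEquiv.ofBijective ωK hbK with heK
  have appI : ∀ f, ωI (eI.symm f) = f := fun f => eI.apply_symm_apply f
  have appJ : ∀ f, ωJ (eJ.symm f) = f := fun f => eJ.apply_symm_apply f
  have appK : ∀ f, ωK (eK.symm f) = f := fun f => eK.apply_symm_apply f
  have hIJ' : ∀ x : V, eI.symm (ωJ x) = -(eJ.symm (ωI x)) := by
    intro x
    have := LinearMap.congr_fun hIJ x
    simpa using this
  have hJK' : ∀ x : V, eJ.symm (ωK x) = -(eK.symm (ωJ x)) := by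
    intro x
    have := LinearMap.congr_fun hJK x
    simpa using this
  have hKI' : ∀ x : V, eK.symm (ωI x) = -(eI.symm (ωK x)) := by
    intro x
    have := LinearMap.congr_fun hKI x
    simpa using this
  constructor
  · intro v w
    set u := eJ.symm (ωI w) with hu
    set y := eI.symm (ωJ w) with hy
    have huy : u = -y := by
      have := hIJ' w
      rw [← hy, ← hu] at this
      rw [this, neg_neg]
    -- key identity : ωK y = ωI (eJ.symm (ωK w))
    have hkey : ωK y = ωI (eJ.symm (ωK w)) := by
      have h1 : eK.symm (ωI y) = -(eI.symm (ωK y)) := hKI' y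
      have h2 : ωI y = ωJ w := by rw [hy, appI]
      rw [h2] at h1
      have h3 : eJ.symm (ωK w) = -(eK.symm (ωJ w)) := hJK' w
      rw [h1] at h3
      simp only [neg_neg] at h3
      rw [h3, appI]
    calc ωI (eJ.symm (ωK v)) w
        = -(ωI w (eJ.symm (ωK v))) := hskewI _ _
      _ = -(ωJ u (eJ.symm (ωK v))) := by rw [hu, appJ]
      _ = ωJ (eJ.symm (ωK v)) u := by rw [hskewJ u]; ring
      _ = ωK v u := by rw [appJ]
      _ = -(ωK u v) := hskewK _ _
      _ = ωK y v := by rw [huy]; simp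
      _ = ωI (eJ.symm (ωK w)) v := by rw [hkey]
  · have : ⇑(ωI ∘ₗ eJ.symm.toLinearMap ∘ₗ ωK) = ⇑ωI ∘ ⇑eJ.symm ∘ ⇑ωK := by
      ext x; simp
    rw [this]
    exact hbI.comp (eJ.symm.bijective.comp hbK)
end

section
/- Let V be a finite-dimensional real vector space and let ω_I, ω_J, ω_K be nondegenerate skew-symmetric bilinear forms on V, regarded as linear isomorphisms ω̂_I, ω̂_J, ω̂_K : V → V* via v ↦ ω(v,·). Assume ω̂_I⁻¹∘ω̂_J = −ω̂_J⁻¹∘ω̂_I, ω̂_J⁻¹∘ω̂_K = −ω̂_K⁻¹∘ω̂_J, and ω̂_K⁻¹∘ω̂_I = −ω̂_I⁻¹∘ω̂_K. Set ĝ := ω̂_I∘ω̂_J⁻¹∘ω̂_K : V → V*. Then the endomorphisms I := ĝ⁻¹∘ω̂_I, J := ĝ⁻¹∘ω̂_J, K := ĝ⁻¹∘ω̂_K of V satisfy the quaternionic relations I² = J² = K² = I∘J∘K = −id_V. -/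
/-!
Write `ρ e f := e⁻¹ ∘ f` for isomorphisms `e f : V → V*`; then `ρ e f ∘ ρ f g = ρ e g` and
`ρ e e = id`, so the anticommutation hypothesis `ρ e f = -ρ f e` says exactly that
`ρ e f` squares to `-id`. Since `ĝ⁻¹ = ω_K⁻¹ ∘ ω_J ∘ ω_I⁻¹`, the hypotheses identify
`I = -ρ ω_J ω_K`, `J = -ρ ω_K ω_I`, `K = -ρ ω_I ω_J`: each squares to `-id`, and
`I ∘ J ∘ K = -ρ ω_J ω_J = -id` by telescoping.
-/

namespace LinearEquiv

variable {R M N : Type*} [Semiring R] [AddCommGroup M] [AddCommGroup N] [Module R M]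
  [Module R N]

theorem symm_comp_comp_symm_comp (e f g : M ≃ₗ[R] N) :
    (e.symm.toLinearMap ∘ₗ f.toLinearMap) ∘ₗ (f.symm.toLinearMap ∘ₗ g.toLinearMap) =
      e.symm.toLinearMap ∘ₗ g.toLinearMap := by
  ext; simp

theorem symm_comp_comp_self_eq_neg_id {e f : M ≃ₗ[R] N}
    (h : e.symm.toLinearMap ∘ₗ f.toLinearMap = -(f.symm.toLinearMap ∘ₗ e.toLinearMap)) :
    (e.symm.toLinearMap ∘ₗ f.toLinearMap) ∘ₗ (e.symm.toLinearMap ∘ₗ f.toLinearMap) =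
      -LinearMap.id := by
  nth_rw 2 [h]
  rw [LinearMap.comp_neg, symm_comp_comp_symm_comp, symm_comp]

theorem quaternion_relations_of_symm_comp_anticomm (a b c : M ≃ₗ[R] N)
    (hab : a.symm.toLinearMap ∘ₗ b.toLinearMap = -(b.symm.toLinearMap ∘ₗ a.toLinearMap))
    (hbc : b.symm.toLinearMap ∘ₗ c.toLinearMap = -(c.symm.toLinearMap ∘ₗ b.toLinearMap))
    (hca : c.symm.toLinearMap ∘ₗ a.toLinearMap = -(a.symm.toLinearMap ∘ₗ c.toLinearMap)) :
    let g : M ≃ₗ[R] N := c.trans (b.symm.trans a)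
    let I : M →ₗ[R] M := g.symm.toLinearMap ∘ₗ a.toLinearMap
    let J : M →ₗ[R] M := g.symm.toLinearMap ∘ₗ b.toLinearMap
    let K : M →ₗ[R] M := g.symm.toLinearMap ∘ₗ c.toLinearMap
    I ∘ₗ I = -LinearMap.id ∧ J ∘ₗ J = -LinearMap.id ∧ K ∘ₗ K = -LinearMap.id ∧
      I ∘ₗ (J ∘ₗ K) = -LinearMap.id := by
  intro g I J K
  have hg (x : M →ₗ[R] N) : g.symm.toLinearMap ∘ₗ x =
      (c.symm.toLinearMap ∘ₗ b.toLinearMap) ∘ₗ (a.symm.toLinearMap ∘ₗ x) := rfl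
  have hI : I = -(b.symm.toLinearMap ∘ₗ c.toLinearMap) := by
    rw [hbc, neg_neg, show I = _ from hg _, symm_comp, LinearMap.comp_id]
  have hJ : J = -(c.symm.toLinearMap ∘ₗ a.toLinearMap) := by
    rw [show J = _ from hg _, hab, LinearMap.comp_neg, symm_comp_comp_symm_comp]
  have hK : K = -(a.symm.toLinearMap ∘ₗ b.toLinearMap) := by
    rw [hab, neg_neg, show K = _ from hg _, neg_eq_iff_eq_neg.mp hbc.symm,
      neg_eq_iff_eq_neg.mp hca.symm, LinearMap.neg_comp, LinearMap.comp_neg, neg_neg,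
      symm_comp_comp_symm_comp]
  rw [hI, hJ, hK]
  simp only [LinearMap.neg_comp, LinearMap.comp_neg, neg_neg]
  refine ⟨symm_comp_comp_self_eq_neg_id hbc, symm_comp_comp_self_eq_neg_id hca,
    symm_comp_comp_self_eq_neg_id hab, ?_⟩
  rw [symm_comp_comp_symm_comp, symm_comp_comp_symm_comp, symm_comp]

end LinearEquiv

theorem stmt_1_general {V : Type} [AddCommGroup V] [Module ℝ V]
    (ωI ωJ ωK : V →ₗ[ℝ] Module.Dual ℝ V)
    (hbI : Function.Bijective ωI) (hbJ : Function.Bijective ωJ)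
    (hbK : Function.Bijective ωK)
    (hIJ : (LinearEquiv.ofBijective ωI hbI).symm.toLinearMap ∘ₗ ωJ
        = -((LinearEquiv.ofBijective ωJ hbJ).symm.toLinearMap ∘ₗ ωI))
    (hJK : (LinearEquiv.ofBijective ωJ hbJ).symm.toLinearMap ∘ₗ ωK
        = -((LinearEquiv.ofBijective ωK hbK).symm.toLinearMap ∘ₗ ωJ))
    (hKI : (LinearEquiv.ofBijective ωK hbK).symm.toLinearMap ∘ₗ ωI
        = -((LinearEquiv.ofBijective ωI hbI).symm.toLinearMap ∘ₗ ωK)) :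
    let gHat : V ≃ₗ[ℝ] Module.Dual ℝ V :=
      (LinearEquiv.ofBijective ωK hbK).trans
        (((LinearEquiv.ofBijective ωJ hbJ).symm).trans
          (LinearEquiv.ofBijective ωI hbI))
    let I : V →ₗ[ℝ] V := gHat.symm.toLinearMap ∘ₗ ωI
    let J : V →ₗ[ℝ] V := gHat.symm.toLinearMap ∘ₗ ωJ
    let K : V →ₗ[ℝ] V := gHat.symm.toLinearMap ∘ₗ ωK
    I ∘ₗ I = -LinearMap.id ∧ J ∘ₗ J = -LinearMap.id ∧ K ∘ₗ K = -LinearMap.id ∧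
      I ∘ₗ (J ∘ₗ K) = -LinearMap.id :=
  LinearEquiv.quaternion_relations_of_symm_comp_anticomm _ _ _ hIJ hJK hKI

/-- Let `V` be a finite-dimensional real vector space and `ωI, ωJ, ωK` nondegenerate
skew-symmetric bilinear forms on `V`, regarded as bijective linear maps `V → V*`,
satisfying `ωI⁻¹ ∘ ωJ = -ωJ⁻¹ ∘ ωI`, `ωJ⁻¹ ∘ ωK = -ωK⁻¹ ∘ ωJ` and
`ωK⁻¹ ∘ ωI = -ωI⁻¹ ∘ ωK`.  Set `ĝ := ωI ∘ ωJ⁻¹ ∘ ωK : V ≃ V*` (a composition of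
bijections).  Then the endomorphisms `I := ĝ⁻¹ ∘ ωI`, `J := ĝ⁻¹ ∘ ωJ`, `K := ĝ⁻¹ ∘ ωK`
of `V` satisfy the quaternionic relations `I² = J² = K² = I∘J∘K = -id`. -/
theorem stmt_1 {V : Type} [AddCommGroup V] [Module ℝ V] [FiniteDimensional ℝ V]
    (ωI ωJ ωK : V →ₗ[ℝ] Module.Dual ℝ V)
    (hskewI : ∀ v w : V, ωI v w = -(ωI w v))
    (hskewJ : ∀ v w : V, ωJ v w = -(ωJ w v))
    (hskewK : ∀ v w : V, ωK v w = -(ωK w v))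
    (hbI : Function.Bijective ωI) (hbJ : Function.Bijective ωJ)
    (hbK : Function.Bijective ωK)
    (hIJ : (LinearEquiv.ofBijective ωI hbI).symm.toLinearMap ∘ₗ ωJ
        = -((LinearEquiv.ofBijective ωJ hbJ).symm.toLinearMap ∘ₗ ωI))
    (hJK : (LinearEquiv.ofBijective ωJ hbJ).symm.toLinearMap ∘ₗ ωK
        = -((LinearEquiv.ofBijective ωK hbK).symm.toLinearMap ∘ₗ ωJ))
    (hKI : (LinearEquiv.ofBijective ωK hbK).symm.toLinearMap ∘ₗ ωI
        = -((LinearEquiv.ofBijective ωI hbI).symm.toLinearMap ∘ₗ ωK)) :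
    let gHat : V ≃ₗ[ℝ] Module.Dual ℝ V :=
      (LinearEquiv.ofBijective ωK hbK).trans
        (((LinearEquiv.ofBijective ωJ hbJ).symm).trans
          (LinearEquiv.ofBijective ωI hbI))
    let I : V →ₗ[ℝ] V := gHat.symm.toLinearMap ∘ₗ ωI
    let J : V →ₗ[ℝ] V := gHat.symm.toLinearMap ∘ₗ ωJ
    let K : V →ₗ[ℝ] V := gHat.symm.toLinearMap ∘ₗ ωK
    I ∘ₗ I = -LinearMap.id ∧ J ∘ₗ J = -LinearMap.id ∧ K ∘ₗ K = -LinearMap.id ∧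
      I ∘ₗ (J ∘ₗ K) = -LinearMap.id :=
  stmt_1_general ωI ωJ ωK hbI hbJ hbK hIJ hJK hKI
end

section
/- Let (V, g, I, J, K) be a hyper-Kähler vector space of real dimension 2n (n ≥ 1) with associated Kähler forms ω_I, ω_J, ω_K. Then for every w ∈ V*, the identity ω_I^{n−1} ∧ (w∘K) = ω_J^{n−1} ∧ w holds in ⋀^{2n−1}V*, where w∘K ∈ V* is the precomposition of w with K. -/
/-!
Put `T = 1 + K`. The quaternion relations and the `g`-skewness of `I, J, K` give
`T^*ω_J = 2 ω_I`, and `det T = 2ⁿ` since `K² = -1`. As `ωⁿ` has top degree, pulling it back by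
`T` multiplies it by `det T`, hence `ω_Iⁿ = ω_Jⁿ`. Contraction with a vector `v` is a
derivation sending `ω` to `ω(v, ·)`, so contracting with `v = -J u`, where `g u = w`, gives
`n ω_Iⁿ⁻¹ ∧ ω_I(v) = n ω_Jⁿ⁻¹ ∧ ω_J(v)`, and `ω_I(v) = w ∘ K`, `ω_J(v) = w`.
-/

/-- The element of `⋀² V*` (inside the exterior algebra of the dual space) corresponding to
a bilinear form `B` on `V` (given as a linear map `V →ₗ V*`): in terms of a basis `(eᵢ)`
with dual basis `(eⁱ)`, it is `∑_{i<j} B(eᵢ,eⱼ) eⁱ ∧ eʲ = ½ ∑_{i,j} B(eᵢ,eⱼ) eⁱ ∧ eʲ`. -/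
noncomputable def extOfForm {V : Type} [AddCommGroup V] [Module ℝ V] [FiniteDimensional ℝ V]
    (B : V →ₗ[ℝ] Module.Dual ℝ V) : ExteriorAlgebra ℝ (Module.Dual ℝ V) :=
  (2⁻¹ : ℝ) • TensorProduct.lift
    (((LinearMap.mul ℝ (ExteriorAlgebra ℝ (Module.Dual ℝ V))).compl₂
        (ExteriorAlgebra.ι ℝ)) ∘ₗ (ExteriorAlgebra.ι ℝ))
    ((dualTensorHomEquiv ℝ V (Module.Dual ℝ V)).symm B)

open scoped TensorProduct

namespace Module.Basis

theorem alternatingMap_apply_eq_det_smul {R M N ι : Type*} [CommRing R] [AddCommGroup M]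
    [Module R M] [AddCommGroup N] [Module R N] [Fintype ι] [DecidableEq ι]
    (e : Basis ι R M) (f : M [⋀^ι]→ₗ[R] N) (v : ι → M) : f v = e.det v • f e := by
  suffices f = (LinearMap.toSpanSingleton R N (f e)).compAlternatingMap e.det by
    conv_lhs => rw [this]
    rfl
  refine e.ext_alternating fun i hi => ?_
  let σ : Equiv.Perm ι := Equiv.ofBijective i (Finite.injective_iff_bijective.1 hi)
  change f (e ∘ σ) = LinearMap.toSpanSingleton R N (f e) (e.det (e ∘ σ))
  rw [f.map_perm, AlternatingMap.map_perm, e.det_self,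
    LinearMap.toSpanSingleton_apply, Units.smul_def, Units.smul_def, Int.smul_one_eq_cast,
    Int.cast_smul_eq_zsmul]

end Module.Basis

namespace ExteriorAlgebra

variable {R M N : Type*} [CommRing R] [AddCommGroup M] [Module R M] [AddCommGroup N] [Module R N]

theorem map_eq_det_smul_of_mem_top [Nontrivial R] [Module.Free R M] [Module.Finite R M]
    (f : M →ₗ[R] M) {x : ExteriorAlgebra R M} (hx : x ∈ ⋀[R]^(Module.finrank R M) M) :
    map f x = LinearMap.det f • x := by
  rw [← ιMulti_span_fixedDegree] at hx
  induction hx using Submodule.span_induction with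
  | mem x h =>
    obtain ⟨v, rfl⟩ := h
    have e := Module.finBasis R M
    rw [map_apply_ιMulti, e.alternatingMap_apply_eq_det_smul (ιMulti R _) (f ∘ v), e.det_comp,
      e.alternatingMap_apply_eq_det_smul (ιMulti R _) v, smul_smul]
  | zero => simp
  | add x y _ _ hx hy => rw [map_add, hx, hy, smul_add]
  | smul a x _ hx => rw [map_smul, hx, smul_comm]

variable (R M) in
def wedge : M ⊗[R] M →ₗ[R] ExteriorAlgebra R M :=
  TensorProduct.lift ((LinearMap.mul R (ExteriorAlgebra R M)).compl₂ (ι R) ∘ₗ ι R)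

@[simp]
theorem wedge_tmul (a b : M) : wedge R M (a ⊗ₜ b) = ι R a * ι R b := rfl

theorem wedge_mem (t : M ⊗[R] M) : wedge R M t ∈ ⋀[R]^2 M := by
  induction t using TensorProduct.induction_on with
  | zero => simp
  | tmul a b =>
    rw [wedge_tmul, exteriorPower, pow_two]
    exact Submodule.mul_mem_mul (LinearMap.mem_range_self _ a) (LinearMap.mem_range_self _ b)
  | add t₁ t₂ h₁ h₂ => rw [map_add]; exact add_mem h₁ h₂

theorem commute_wedge_ι (t : M ⊗[R] M) (c : M) : Commute (wedge R M t) (ι R c) := by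
  induction t using TensorProduct.induction_on with
  | zero => simp
  | tmul a b =>
    have anticomm : ∀ p q : M, ι R p * ι R q = -(ι R q * ι R p) := fun p q =>
      eq_neg_of_add_eq_zero_left (ι_add_mul_swap p q)
    change ι R a * ι R b * ι R c = ι R c * (ι R a * ι R b)
    rw [mul_assoc, anticomm b, mul_neg, ← mul_assoc, anticomm a, neg_mul, neg_neg, mul_assoc]
  | add t₁ t₂ h₁ h₂ => rw [map_add]; exact h₁.add_left h₂

theorem map_wedge (f : M →ₗ[R] N) (t : M ⊗[R] M) :
    map f (wedge R M t) = wedge R N (TensorProduct.map f f t) := by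
  induction t using TensorProduct.induction_on with
  | zero => simp
  | tmul a b => simp
  | add t₁ t₂ h₁ h₂ => simp [h₁, h₂]

theorem contractLeft_wedge_tmul (d : Module.Dual R M) (a b : M) :
    CliffordAlgebra.contractLeft d (wedge R M (a ⊗ₜ b)) = d a • ι R b - d b • ι R a := by
  rw [wedge_tmul, CliffordAlgebra.contractLeft_ι_mul, CliffordAlgebra.contractLeft_ι,
    ← Algebra.commutes, ← Algebra.smul_def]

theorem contractLeft_wedge_mul (d : Module.Dual R M) (t : M ⊗[R] M) (x : ExteriorAlgebra R M) :
    CliffordAlgebra.contractLeft d (wedge R M t * x)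
      = CliffordAlgebra.contractLeft d (wedge R M t) * x
        + wedge R M t * CliffordAlgebra.contractLeft d x := by
  induction t using TensorProduct.induction_on with
  | zero => simp
  | tmul a b =>
    rw [contractLeft_wedge_tmul, wedge_tmul, mul_assoc, CliffordAlgebra.contractLeft_ι_mul,
      CliffordAlgebra.contractLeft_ι_mul]
    simp only [mul_sub, sub_mul, smul_mul_assoc, mul_smul_comm, mul_assoc]
    abel
  | add t₁ t₂ h₁ h₂ => simp only [map_add, add_mul, h₁, h₂]; abel

end ExteriorAlgebra

section DualTensor

open ExteriorAlgebra CliffordAlgebra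

variable {R M : Type*} [CommRing R] [AddCommGroup M] [Module R M]

theorem dualTensorHom_map_dualMap (T : M →ₗ[R] M) (t : Module.Dual R M ⊗[R] Module.Dual R M) :
    dualTensorHom R M (Module.Dual R M) (TensorProduct.map T.dualMap T.dualMap t)
      = T.dualMap ∘ₗ dualTensorHom R M (Module.Dual R M) t ∘ₗ T := by
  induction t using TensorProduct.induction_on with
  | zero => simp
  | tmul a b => ext; simp
  | add t₁ t₂ h₁ h₂ => ext; simp [h₁, h₂]

theorem contractLeft_eval_wedge (v : M) (t : Module.Dual R M ⊗[R] Module.Dual R M) :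
    contractLeft (Module.Dual.eval R M v) (wedge R (Module.Dual R M) t)
      = ι R (dualTensorHom R M (Module.Dual R M) t v)
        - ι R ((dualTensorHom R M (Module.Dual R M) t).flip v) := by
  induction t using TensorProduct.induction_on with
  | zero =>
    have flip_zero : (0 : M →ₗ[R] Module.Dual R M).flip v = 0 := rfl
    simp [flip_zero]
  | tmul a b =>
    rw [contractLeft_wedge_tmul, ← map_smul, ← map_smul]
    congr 2
    ext x
    simp [mul_comm]
  | add t₁ t₂ h₁ h₂ =>
    have flip_add (φ ψ : M →ₗ[R] Module.Dual R M) : (φ + ψ).flip v = φ.flip v + ψ.flip v := rfl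
    simp only [map_add, h₁, h₂, flip_add, LinearMap.add_apply]
    abel

end DualTensor

section KahlerForm

open ExteriorAlgebra CliffordAlgebra

variable {V : Type} [AddCommGroup V] [Module ℝ V] [FiniteDimensional ℝ V]

theorem extOfForm_eq_smul_wedge (B : V →ₗ[ℝ] Module.Dual ℝ V) :
    extOfForm B = (2⁻¹ : ℝ) •
      wedge ℝ (Module.Dual ℝ V) ((dualTensorHomEquiv ℝ V (Module.Dual ℝ V)).symm B) :=
  rfl

theorem dualTensorHom_dualTensorHomEquiv_symm (B : V →ₗ[ℝ] Module.Dual ℝ V) :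
    dualTensorHom ℝ V (Module.Dual ℝ V) ((dualTensorHomEquiv ℝ V (Module.Dual ℝ V)).symm B) = B :=
  (dualTensorHomEquiv ℝ V (Module.Dual ℝ V)).apply_symm_apply B

theorem extOfForm_smul (c : ℝ) (B : V →ₗ[ℝ] Module.Dual ℝ V) :
    extOfForm (c • B) = c • extOfForm B := by
  rw [extOfForm_eq_smul_wedge, extOfForm_eq_smul_wedge, map_smul, map_smul, smul_comm]

theorem extOfForm_pow_mem (B : V →ₗ[ℝ] Module.Dual ℝ V) (n : ℕ) :
    extOfForm B ^ n ∈ ⋀[ℝ]^(2 * n) (Module.Dual ℝ V) := by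
  rw [mul_comm]
  exact SetLike.pow_mem_graded n (Submodule.smul_mem _ _ (wedge_mem _))

theorem commute_extOfForm_ι (B : V →ₗ[ℝ] Module.Dual ℝ V) (c : Module.Dual ℝ V) :
    Commute (extOfForm B) (ι ℝ c) :=
  (commute_wedge_ι _ c).smul_left _

theorem map_dualMap_extOfForm (T : V →ₗ[ℝ] V) (B : V →ₗ[ℝ] Module.Dual ℝ V) :
    map T.dualMap (extOfForm B) = extOfForm (T.dualMap ∘ₗ B ∘ₗ T) := by
  rw [extOfForm_eq_smul_wedge, extOfForm_eq_smul_wedge, map_smul, map_wedge]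
  congr 2
  rw [LinearEquiv.eq_symm_apply]
  exact (dualTensorHom_map_dualMap T _).trans (by rw [dualTensorHom_dualTensorHomEquiv_symm])

theorem det_smul_extOfForm_pow {n : ℕ} (hdim : Module.finrank ℝ V = 2 * n) (T : V →ₗ[ℝ] V)
    (B : V →ₗ[ℝ] Module.Dual ℝ V) :
    LinearMap.det T • extOfForm B ^ n = extOfForm (T.dualMap ∘ₗ B ∘ₗ T) ^ n := by
  have htop : extOfForm B ^ n ∈ ⋀[ℝ]^(Module.finrank ℝ (Module.Dual ℝ V)) (Module.Dual ℝ V) := by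
    rw [Subspace.dual_finrank_eq, hdim]
    exact extOfForm_pow_mem B n
  rw [← map_dualMap_extOfForm, ← map_pow, map_eq_det_smul_of_mem_top _ htop, LinearMap.det_dualMap]

theorem contractLeft_eval_extOfForm {B : V →ₗ[ℝ] Module.Dual ℝ V} (hB : ∀ x y, B x y = -B y x)
    (v : V) : contractLeft (Module.Dual.eval ℝ V v) (extOfForm B) = ι ℝ (B v) := by
  have hflip : B.flip v = -B v := by ext x; exact hB x v
  rw [extOfForm_eq_smul_wedge, map_smul, contractLeft_eval_wedge,
    dualTensorHom_dualTensorHomEquiv_symm, hflip, map_neg, sub_neg_eq_add, ← two_smul ℝ,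
    smul_smul, inv_mul_cancel₀ two_ne_zero, one_smul]

theorem contractLeft_extOfForm_mul (d : Module.Dual ℝ (Module.Dual ℝ V))
    (B : V →ₗ[ℝ] Module.Dual ℝ V) (x : ExteriorAlgebra ℝ (Module.Dual ℝ V)) :
    contractLeft d (extOfForm B * x)
      = contractLeft d (extOfForm B) * x + extOfForm B * contractLeft d x := by
  rw [extOfForm_eq_smul_wedge, smul_mul_assoc, map_smul, map_smul, contractLeft_wedge_mul,
    smul_add, smul_mul_assoc, smul_mul_assoc]

theorem contractLeft_eval_extOfForm_pow_succ {B : V →ₗ[ℝ] Module.Dual ℝ V}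
    (hB : ∀ x y, B x y = -B y x) (v : V) (k : ℕ) :
    contractLeft (Module.Dual.eval ℝ V v) (extOfForm B ^ (k + 1))
      = ((k + 1 : ℕ) : ℝ) • (extOfForm B ^ k * ι ℝ (B v)) := by
  induction k with
  | zero => simp [contractLeft_eval_extOfForm hB]
  | succ k ih =>
    rw [pow_succ' _ (k + 1), contractLeft_extOfForm_mul, contractLeft_eval_extOfForm hB, ih,
      mul_smul_comm, ← mul_assoc, ← pow_succ', ← ((commute_extOfForm_ι B (B v)).pow_left _).eq]
    push_cast
    module

theorem extOfForm_pow_eq_of_dualMap_comp_comp {n : ℕ} (hdim : Module.finrank ℝ V = 2 * n)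
    {B B' : V →ₗ[ℝ] Module.Dual ℝ V} {T : V →ₗ[ℝ] V} {c : ℝ} (hc : c ≠ 0)
    (hT : T.dualMap ∘ₗ B' ∘ₗ T = c • B) (hdet : LinearMap.det T = c ^ n) :
    extOfForm B ^ n = extOfForm B' ^ n := by
  have h := det_smul_extOfForm_pow hdim T B'
  rw [hT, extOfForm_smul, smul_pow, hdet] at h
  exact smul_right_injective _ (pow_ne_zero n hc) h.symm

theorem extOfForm_pow_mul_ι_eq_of_pow_succ_eq {B B' : V →ₗ[ℝ] Module.Dual ℝ V}
    (hB : ∀ x y, B x y = -B y x) (hB' : ∀ x y, B' x y = -B' y x) {k : ℕ}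
    (h : extOfForm B ^ (k + 1) = extOfForm B' ^ (k + 1)) (v : V) :
    extOfForm B ^ k * ι ℝ (B v) = extOfForm B' ^ k * ι ℝ (B' v) := by
  have hv := congrArg (contractLeft (Module.Dual.eval ℝ V v)) h
  rw [contractLeft_eval_extOfForm_pow_succ hB, contractLeft_eval_extOfForm_pow_succ hB'] at hv
  exact smul_right_injective _ (Nat.cast_ne_zero.mpr k.succ_ne_zero) hv

end KahlerForm

theorem quaternion_relations {A : Type*} [Ring A] {i j k : A} (hi : i * i = -1) (hj : j * j = -1)
    (hk : k * k = -1) (hijk : i * (j * k) = -1) :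
    i * j = k ∧ j * k = i ∧ k * i = j ∧ k * j = -i := by
  have hij : i * j = k :=
    calc i * j = -(i * j * (k * k)) := by rw [hk, mul_neg_one, neg_neg]
      _ = -(i * (j * k) * k) := by noncomm_ring
      _ = k := by rw [hijk, neg_one_mul, neg_neg]
  have hjk : j * k = i :=
    calc j * k = -(i * i * (j * k)) := by rw [hi, neg_one_mul, neg_neg]
      _ = i := by rw [mul_assoc, hijk, mul_neg_one, neg_neg]
  have hkj : k * j = -i := by rw [← hij, mul_assoc, hj, mul_neg_one]
  have hki : k * i = j :=
    calc k * i = k * j * k := by rw [mul_assoc, hjk]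
      _ = -(i * (i * j)) := by rw [hkj, hij, neg_mul]
      _ = j := by rw [← mul_assoc, hi, neg_one_mul, neg_neg]
  exact ⟨hij, hjk, hki, hkj⟩

section Skew

variable {R M : Type*} [CommRing R] [AddCommGroup M] [Module R M] {g : M →ₗ[R] Module.Dual R M}
  {K : Module.End R M}

theorem apply_apply_eq_neg_of_isometry (hK : K * K = -1) (hiso : ∀ v w, g (K v) (K w) = g v w)
    (v w : M) : g v (K w) = -g (K v) w := by
  rw [← hiso v (K w), ← Module.End.mul_apply, hK]
  simp

theorem comp_apply_eq_neg_of_skew (hsymm : ∀ v w, g v w = g w v)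
    (hskew : ∀ v w, g v (K w) = -g (K v) w) (x y : M) : (g ∘ₗ K) x y = -(g ∘ₗ K) y x := by
  rw [LinearMap.comp_apply, LinearMap.comp_apply, hsymm, hskew]

end Skew

section ComplexStructure

variable {V : Type*} [AddCommGroup V] [Module ℝ V]

theorem one_add_mul_self_of_mul_self_eq_neg_one {K : Module.End ℝ V} (hK : K * K = -1) :
    (1 + K) * (1 + K) = (2 : ℝ) • K := by
  rw [mul_add, add_mul, add_mul, hK]
  module

variable [FiniteDimensional ℝ V]

theorem det_nonneg_of_smul_eq_mul_self {f S : Module.End ℝ V} {c : ℝ} (hc : 0 < c)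
    (h : c • f = S * S) : 0 ≤ LinearMap.det f := by
  have hdet : c ^ Module.finrank ℝ V * LinearMap.det f = LinearMap.det S * LinearMap.det S := by
    rw [← LinearMap.det_smul, h, map_mul]
  exact (mul_nonneg_iff_of_pos_left (pow_pos hc _)).mp (hdet ▸ mul_self_nonneg _)

variable {K : Module.End ℝ V}

theorem det_eq_one_of_mul_self_eq_neg_one (hK : K * K = -1) : LinearMap.det K = 1 := by
  have hnonneg : 0 ≤ LinearMap.det K :=
    det_nonneg_of_smul_eq_mul_self two_pos (one_add_mul_self_of_mul_self_eq_neg_one hK).symm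
  have hsq : LinearMap.det K * LinearMap.det K = (-1) ^ Module.finrank ℝ V := by
    rw [← map_mul, hK, ← neg_one_smul ℝ 1, LinearMap.det_smul, map_one, mul_one]
  rcases neg_one_pow_eq_or ℝ (Module.finrank ℝ V) with h | h <;> rw [h] at hsq <;> nlinarith

/-- `1 + K` is a square up to a positive factor: `((1 + √2) + K)² = (2 + 2√2)(1 + K)`,
so its determinant is nonnegative. -/
theorem det_one_add_of_mul_self_eq_neg_one {n : ℕ} (hdim : Module.finrank ℝ V = 2 * n)
    (hK : K * K = -1) : LinearMap.det (1 + K) = 2 ^ n := by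
  have hsqrt : √2 * √2 = 2 := Real.mul_self_sqrt zero_le_two
  have hroot : (2 + 2 * √2) • (1 + K) = ((1 + √2) • 1 + K) * ((1 + √2) • 1 + K) := by
    simp only [mul_add, add_mul, smul_mul_assoc, mul_smul_comm, one_mul, mul_one, hK]
    match_scalars
    · linear_combination -hsqrt
    · ring
  have hnonneg : 0 ≤ LinearMap.det (1 + K) :=
    det_nonneg_of_smul_eq_mul_self (by positivity) hroot
  have hsq : LinearMap.det (1 + K) ^ 2 = (2 ^ n) ^ 2 := by
    rw [sq, ← map_mul, one_add_mul_self_of_mul_self_eq_neg_one hK, LinearMap.det_smul,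
      det_eq_one_of_mul_self_eq_neg_one hK, hdim]
    ring
  exact (sq_eq_sq₀ hnonneg (by positivity)).mp hsq

end ComplexStructure

theorem stmt_8_general {V : Type} [AddCommGroup V] [Module ℝ V] [FiniteDimensional ℝ V]
    (n : ℕ) (hn : 1 ≤ n) (hdim : Module.finrank ℝ V = 2 * n)
    (g : V →ₗ[ℝ] Module.Dual ℝ V)
    (hgsymm : ∀ v w : V, g v w = g w v)
    (hgbij : Function.Bijective g)
    (I J K : V →ₗ[ℝ] V)
    (hI2 : I ∘ₗ I = -LinearMap.id) (hJ2 : J ∘ₗ J = -LinearMap.id)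
    (hK2 : K ∘ₗ K = -LinearMap.id) (hIJK : I ∘ₗ (J ∘ₗ K) = -LinearMap.id)
    (hIiso : ∀ v w : V, g (I v) (I w) = g v w)
    (hJiso : ∀ v w : V, g (J v) (J w) = g v w)
    (hKiso : ∀ v w : V, g (K v) (K w) = g v w)
    :
    ∀ w : Module.Dual ℝ V,
      extOfForm (g ∘ₗ I) ^ (n - 1) * ExteriorAlgebra.ι ℝ (w ∘ₗ K)
        = extOfForm (g ∘ₗ J) ^ (n - 1) * ExteriorAlgebra.ι ℝ w := by
  intro w
  obtain ⟨hIJ, hJK, hKI, hKJ⟩ := quaternion_relations hI2 hJ2 hK2 hIJK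
  have hgI := apply_apply_eq_neg_of_isometry hI2 hIiso
  have hgJ := apply_apply_eq_neg_of_isometry hJ2 hJiso
  have hgK := apply_apply_eq_neg_of_isometry hK2 hKiso
  have hpull : (1 + K).dualMap ∘ₗ (g ∘ₗ J) ∘ₗ (1 + K) = (2 : ℝ) • (g ∘ₗ I) := by
    ext v x
    have hJKv : J (K v) = I v := LinearMap.congr_fun hJK v
    simp only [LinearMap.comp_apply, LinearMap.dualMap_apply, LinearMap.add_apply,
      Module.End.one_apply, map_add, hJKv, hgK, LinearMap.smul_apply]
    rw [← Module.End.mul_apply K J, ← Module.End.mul_apply K I, hKJ, hKI]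
    simp only [LinearMap.neg_apply, map_neg]
    ring
  have htop : extOfForm (g ∘ₗ I) ^ n = extOfForm (g ∘ₗ J) ^ n :=
    extOfForm_pow_eq_of_dualMap_comp_comp hdim two_ne_zero hpull
      (det_one_add_of_mul_self_eq_neg_one hdim hK2)
  obtain ⟨u, rfl⟩ := hgbij.2 w
  have hIv : (g ∘ₗ I) (-J u) = g u ∘ₗ K := by
    ext x
    have hIJu : I (J u) = K u := LinearMap.congr_fun hIJ u
    simp [hIJu, hgK]
  have hJv : (g ∘ₗ J) (-J u) = g u := by
    ext x
    have hJJu : J (J u) = -u := by simpa using LinearMap.congr_fun hJ2 u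
    simp [hJJu]
  obtain ⟨m, rfl⟩ : ∃ m, n = m + 1 := ⟨n - 1, by omega⟩
  simpa [hIv, hJv] using extOfForm_pow_mul_ι_eq_of_pow_succ_eq
    (comp_apply_eq_neg_of_skew hgsymm hgI) (comp_apply_eq_neg_of_skew hgsymm hgJ) htop (-J u)

/-- Let `(V, g, I, J, K)` be a hyper-Kähler vector space of real dimension `2n` (`n ≥ 1`),
i.e. a finite-dimensional real inner product space (the inner product `g` given as a
symmetric, positive definite, hence bijective, linear map `V → V*`) with three
endomorphisms `I, J, K` satisfying the quaternionic relations and which are isometries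
of `g`.  Let `ω_I, ω_J, ω_K` be the associated Kähler forms, regarded as elements of
`⋀² V*`.  Then for every `w ∈ V*` we have `ω_I^{n-1} ∧ (w∘K) = ω_J^{n-1} ∧ w` in
`⋀^{2n-1} V*`, where `w∘K ∈ V*` is the precomposition of `w` with `K`. -/
theorem stmt_8 {V : Type} [AddCommGroup V] [Module ℝ V] [FiniteDimensional ℝ V]
    (n : ℕ) (hn : 1 ≤ n) (hdim : Module.finrank ℝ V = 2 * n)
    (g : V →ₗ[ℝ] Module.Dual ℝ V)
    (hgsymm : ∀ v w : V, g v w = g w v)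
    (hgpos : ∀ v : V, v ≠ 0 → 0 < g v v)
    (hgbij : Function.Bijective g)
    (I J K : V →ₗ[ℝ] V)
    (hI2 : I ∘ₗ I = -LinearMap.id) (hJ2 : J ∘ₗ J = -LinearMap.id)
    (hK2 : K ∘ₗ K = -LinearMap.id) (hIJK : I ∘ₗ (J ∘ₗ K) = -LinearMap.id)
    (hIiso : ∀ v w : V, g (I v) (I w) = g v w)
    (hJiso : ∀ v w : V, g (J v) (J w) = g v w)
    (hKiso : ∀ v w : V, g (K v) (K w) = g v w)
    :
    ∀ w : Module.Dual ℝ V,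
      extOfForm (g ∘ₗ I) ^ (n - 1) * ExteriorAlgebra.ι ℝ (w ∘ₗ K)
        = extOfForm (g ∘ₗ J) ^ (n - 1) * ExteriorAlgebra.ι ℝ w :=
  stmt_8_general n hn hdim g hgsymm hgbij I J K hI2 hJ2 hK2 hIJK hIiso hJiso hKiso
end
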